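/- arXiv:2103.14873 — 2 statements merged into one kernel-verified Lean document; each statement's English description precedes it below -/
import Mathlib

section
/- Let φ, ρ_v, ρ_r ∈ ℝ³, and let Λ(φ, ρ_v, ρ_r) denote the 5×5 block matrix [[skew(φ), ρ_v, ρ_r], [0₁ₓ₃, 0, 0], [0₁ₓ₃, 0, 0]]. Then the matrix exponential exp(Λ(φ, ρ_v, ρ_r)) equals the 5×5 block matrix [[exp(skew(φ)), J·ρ_v, J·ρ_r], [0₁ₓ₃, 1, 0], [0₁ₓ₃, 0, 1]], where J = Γ₁(skew(φ)). -/
/-! Write `Λ(φ, ρ_v, ρ_r) = [[S, B], [0, 0]]` with `S = skew φ` and `B = [ρ_v ρ_r]`. Then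
`Λ^(k+1) = [[S^(k+1), S^k B], [0, 0]]`, so summing the exponential series block by block gives
`exp S` in the corner and `Σ_k S^k B / (k+1)! = Γ₁(S) B` in the top right block. -/

open Matrix

/-- The skew-symmetric matrix of a vector `ω ∈ ℝ³`, so that `skew ω *ᵥ v = ω × v`. -/
def skew (ω : Fin 3 → ℝ) : Matrix (Fin 3) (Fin 3) ℝ :=
  !![0, -ω 2, ω 1; ω 2, 0, -ω 0; -ω 1, ω 0, 0]

/-- `Γ_m(A) = Σ_{n=0}^∞ Aⁿ/(n+m)!`; `Γ₁(skew φ)` is the left Jacobian `J` of `SO(3)`. -/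
noncomputable def Gamma {d : ℕ} (m : ℕ) (A : Matrix (Fin d) (Fin d) ℝ) :
    Matrix (Fin d) (Fin d) ℝ :=
  ∑' n : ℕ, (((n + m).factorial : ℝ))⁻¹ • A ^ n

/-- The Lie algebra element `Λ(φ, ρ_v, ρ_r)`: the 5×5 block matrix
`[[skew φ, ρ_v, ρ_r], [0, 0, 0], [0, 0, 0]]`. -/
def lamSE23 (φ ρv ρr : Fin 3 → ℝ) : Matrix (Fin 5) (Fin 5) ℝ :=
  Matrix.of fun i j =>
    if hi : (i : ℕ) < 3 then
      if hj : (j : ℕ) < 3 then skew φ ⟨i, hi⟩ ⟨j, hj⟩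
      else if (j : ℕ) = 3 then ρv ⟨i, hi⟩
      else ρr ⟨i, hi⟩
    else 0

/-- The 5×5 block matrix `[[C, v, r], [0, 1, 0], [0, 0, 1]]` of `SE₂(3)`. -/
def se23 (C : Matrix (Fin 3) (Fin 3) ℝ) (v r : Fin 3 → ℝ) :
    Matrix (Fin 5) (Fin 5) ℝ :=
  Matrix.of fun i j =>
    if hi : (i : ℕ) < 3 then
      if hj : (j : ℕ) < 3 then C ⟨i, hi⟩ ⟨j, hj⟩
      else if (j : ℕ) = 3 then v ⟨i, hi⟩
      else r ⟨i, hi⟩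
    else if (i : ℕ) = (j : ℕ) then 1 else 0

open NormedSpace

theorem HasSum.matrix_fromBlocks {ι l m n o R : Type*} [AddCommMonoid R] [TopologicalSpace R]
    {fA : ι → Matrix n l R} {fB : ι → Matrix n m R} {fC : ι → Matrix o l R}
    {fD : ι → Matrix o m R} {A : Matrix n l R} {B : Matrix n m R} {C : Matrix o l R}
    {D : Matrix o m R} (hA : HasSum fA A) (hB : HasSum fB B) (hC : HasSum fC C)
    (hD : HasSum fD D) :
    HasSum (fun k => fromBlocks (fA k) (fB k) (fC k) (fD k)) (fromBlocks A B C D) := by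
  refine Pi.hasSum.2 fun i => Pi.hasSum.2 fun j => ?_
  rcases i with i | i <;> rcases j with j | j
  · exact Pi.hasSum.1 (Pi.hasSum.1 hA i) j
  · exact Pi.hasSum.1 (Pi.hasSum.1 hB i) j
  · exact Pi.hasSum.1 (Pi.hasSum.1 hC i) j
  · exact Pi.hasSum.1 (Pi.hasSum.1 hD i) j

theorem HasSum.matrix_mul_right {ι l m n R : Type*} [Fintype m] [Semiring R]
    [TopologicalSpace R] [IsTopologicalSemiring R] {f : ι → Matrix l m R} {A : Matrix l m R}
    (hf : HasSum f A) (B : Matrix m n R) : HasSum (fun k => f k * B) (A * B) :=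
  hf.map (mulRightLinearMap l ℕ B).toAddMonoidHom (continuous_id.matrix_mul continuous_const)

theorem Matrix.fromBlocks_zero_zero_pow_succ {m n R : Type*} [Fintype m] [Fintype n]
    [DecidableEq m] [DecidableEq n] [Semiring R] (A : Matrix m m R) (B : Matrix m n R) (k : ℕ) :
    fromBlocks A B 0 (0 : Matrix n n R) ^ (k + 1) = fromBlocks (A ^ (k + 1)) (A ^ k * B) 0 0 := by
  induction k with
  | zero => simp
  | succ k ih => rw [pow_succ, ih, fromBlocks_multiply]; simp [pow_succ, mul_assoc]

theorem summable_inv_factorial_add_smul_pow {𝔸 : Type*} [NormedRing 𝔸] [NormedAlgebra ℝ 𝔸]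
    [CompleteSpace 𝔸] (m : ℕ) (x : 𝔸) :
    Summable fun n : ℕ => ((n + m).factorial : ℝ)⁻¹ • x ^ n := by
  refine .of_norm_bounded (norm_expSeries_summable' (𝕂 := ℝ) x) fun n => ?_
  rw [norm_smul, norm_smul, Real.norm_of_nonneg (by positivity),
    Real.norm_of_nonneg (by positivity)]
  gcongr
  exact Nat.le_add_right n m

section

-- Any of the equivalent matrix norms will do: `exp` and `Gamma` only depend on the topology.
attribute [local instance] Matrix.linftyOpNormedRing Matrix.linftyOpNormedAlgebra

theorem hasSum_Gamma {d : ℕ} (m : ℕ) (A : Matrix (Fin d) (Fin d) ℝ) :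
    HasSum (fun n : ℕ => ((n + m).factorial : ℝ)⁻¹ • A ^ n) (Gamma m A) :=
  (summable_inv_factorial_add_smul_pow m A).hasSum

theorem Matrix.exp_fromBlocks_zero_zero {d : ℕ} {n : Type*} [Fintype n] [DecidableEq n]
    (A : Matrix (Fin d) (Fin d) ℝ) (B : Matrix (Fin d) n ℝ) :
    exp (fromBlocks A B 0 (0 : Matrix n n ℝ)) = fromBlocks (exp A) (Gamma 1 A * B) 0 1 := by
  have hX := exp_series_hasSum_exp' (𝕂 := ℝ) (fromBlocks A B 0 (0 : Matrix n n ℝ))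
  have hA := exp_series_hasSum_exp' (𝕂 := ℝ) A
  -- Both series are compared without their `k = 0` term `1`: from `k = 1` on, powers of the block
  -- matrix have the closed form `fromBlocks_zero_zero_pow_succ`.
  rw [← hasSum_nat_add_iff' 1] at hX hA
  refine sub_left_inj.1 (hX.unique ?_)
  simp only [Finset.sum_range_one, Nat.factorial_zero, Nat.cast_one, inv_one, pow_zero,
    one_smul, fromBlocks_zero_zero_pow_succ, fromBlocks_smul, smul_zero] at hX hA ⊢
  have hblocks : fromBlocks (exp A) (Gamma 1 A * B) 0 1 - 1
      = fromBlocks (exp A - 1) (Gamma 1 A * B) 0 (0 : Matrix n n ℝ) := by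
    rw [sub_eq_iff_eq_add, ← fromBlocks_one, fromBlocks_add]
    simp
  rw [hblocks]
  refine hA.matrix_fromBlocks ?_ hasSum_zero hasSum_zero
  simpa only [Matrix.smul_mul] using (hasSum_Gamma 1 A).matrix_mul_right B

theorem Matrix.exp_reindex {m n : Type*} [Fintype m] [DecidableEq m] [Fintype n] [DecidableEq n]
    (e : m ≃ n) (A : Matrix m m ℝ) : exp (reindex e e A) = reindex e e (exp A) :=
  (map_exp (reindexAlgEquiv ℝ ℝ e) (continuous_id.matrix_reindex e e) A).symm

end

theorem Matrix.mul_transpose_of_pair {m n R : Type*} [Fintype n] [NonUnitalNonAssocSemiring R]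
    (M : Matrix m n R) (v w : n → R) :
    M * (of ![v, w])ᵀ = (of ![M *ᵥ v, M *ᵥ w])ᵀ := by
  ext i j
  fin_cases j <;> rfl

theorem lamSE23_eq_reindex_fromBlocks (φ ρv ρr : Fin 3 → ℝ) :
    lamSE23 φ ρv ρr
      = reindex finSumFinEquiv finSumFinEquiv
        (fromBlocks (skew φ) (of ![ρv, ρr])ᵀ (0 : Matrix (Fin 2) (Fin 3) ℝ) 0) := by
  ext i j
  fin_cases i <;> fin_cases j <;> rfl

theorem se23_eq_reindex_fromBlocks (C : Matrix (Fin 3) (Fin 3) ℝ) (v r : Fin 3 → ℝ) :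
    se23 C v r = reindex finSumFinEquiv finSumFinEquiv
      (fromBlocks C (of ![v, r])ᵀ (0 : Matrix (Fin 2) (Fin 3) ℝ) 1) := by
  ext i j
  fin_cases i <;> fin_cases j <;> rfl

/-- The exponential of `Λ(φ, ρ_v, ρ_r)` is
`[[exp(skew φ), J ρ_v, J ρ_r], [0, 1, 0], [0, 0, 1]]` with `J = Γ₁(skew φ)`. -/
theorem exp_lamSE23 (φ ρv ρr : Fin 3 → ℝ) :
    NormedSpace.exp (lamSE23 φ ρv ρr)
      = se23 (NormedSpace.exp (skew φ))
          (Gamma 1 (skew φ) *ᵥ ρv) (Gamma 1 (skew φ) *ᵥ ρr) := by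
  rw [lamSE23_eq_reindex_fromBlocks, exp_reindex, exp_fromBlocks_zero_zero,
    mul_transpose_of_pair, se23_eq_reindex_fromBlocks]
end

section
/- Let ω, f ∈ ℝ³ and set K = skew(ω). Define Φ : ℝ → 3×3 real matrices by Φ(t) = −exp(−t·K)·skew(Γ₁(t·K)·f)·t. Then Φ(0) = 0 and, for every t ∈ ℝ, Φ is differentiable at t with Φ'(t) = −skew(f)·exp(−t·K) − K·Φ(t). (This is the closed-form solution for the left-invariant state transition matrix block Φ₂₁ satisfying Φ̇₂₁ = −(f̃ᵇ×)Φ₁₁ − (ω̃ᵇ×)Φ₂₁ with Φ₁₁(t) = exp(−t·K).) -/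
open Matrix

attribute [local instance] Matrix.linftyOpNormedAddCommGroup Matrix.linftyOpNormedSpace

/-!
Write `Φ(t) = -exp(-tK) · skew(Ψ(t) f)` with `Ψ(t) = t Γ₁(tK) = Σ tⁿ⁺¹/(n+1)! Kⁿ`.
Differentiating the series termwise gives `Ψ'(t) = exp(tK)`, so the product rule yields
`Φ'(t) = -K Φ(t) - exp(-tK) · skew(exp(tK) f)`. Since `K` is skew-symmetric, `R = exp(tK)` is a
rotation with `Rᵀ = exp(-tK)`, and rotations satisfy `Rᵀ · skew(R u) = skew(u) · Rᵀ`.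
-/

attribute [local instance] Matrix.linftyOpNormedRing Matrix.linftyOpNormedAlgebra

open NormedSpace
open scoped Nat

def skewₗ : (Fin 3 → ℝ) →ₗ[ℝ] Matrix (Fin 3) (Fin 3) ℝ where
  toFun := skew
  map_add' a b := by ext i j; fin_cases i <;> fin_cases j <;> simp [skew] <;> ring
  map_smul' c a := by ext i j; fin_cases i <;> fin_cases j <;> simp [skew]

lemma skew_smul (c : ℝ) (a : Fin 3 → ℝ) : skew (c • a) = c • skew a :=
  skewₗ.map_smul c a

lemma skew_transpose (a : Fin 3 → ℝ) : (skew a)ᵀ = -skew a := by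
  ext i j; fin_cases i <;> fin_cases j <;> simp [skew]

lemma transpose_mul_skew_mulVec_mul (M : Matrix (Fin 3) (Fin 3) ℝ) (u : Fin 3 → ℝ) :
    Mᵀ * skew (M *ᵥ u) * M = M.det • skew u := by
  ext i j
  fin_cases i <;> fin_cases j <;>
    simp [skew, Matrix.mul_apply, Matrix.mulVec, Matrix.det_fin_three, dotProduct,
      Fin.sum_univ_three] <;> ring

lemma transpose_mul_skew_mulVec {R : Matrix (Fin 3) (Fin 3) ℝ}
    (hR : R ∈ specialOrthogonalGroup (Fin 3) ℝ) (u : Fin 3 → ℝ) :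
    Rᵀ * skew (R *ᵥ u) = skew u * Rᵀ := by
  obtain ⟨hRo, hdet⟩ := mem_specialOrthogonalGroup_iff.mp hR
  have hRRt : R * Rᵀ = 1 := (mem_orthogonalGroup_iff _ _).mp hRo
  calc Rᵀ * skew (R *ᵥ u) = Rᵀ * skew (R *ᵥ u) * R * Rᵀ := by
        rw [Matrix.mul_assoc _ R, hRRt, Matrix.mul_one]
    _ = skew u * Rᵀ := by rw [transpose_mul_skew_mulVec_mul, hdet, one_smul]

lemma HasDerivAt.skew_mulVec {M : ℝ → Matrix (Fin 3) (Fin 3) ℝ} {M' : Matrix (Fin 3) (Fin 3) ℝ}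
    {t : ℝ} (hM : HasDerivAt M M' t) (u : Fin 3 → ℝ) :
    HasDerivAt (fun s => skew (M s *ᵥ u)) (skew (M' *ᵥ u)) t :=
  (skewₗ ∘ₗ (mulVecBilin ℝ ℝ).flip u).toContinuousLinearMap.hasFDerivAt.comp_hasDerivAt t hM

section SkewSymmetricExp

variable {n : Type*} [Fintype n] [DecidableEq n] {K : Matrix n n ℝ}

lemma transpose_exp_smul (hK : Kᵀ = -K) (t : ℝ) : (exp (t • K))ᵀ = exp (-(t • K)) := by
  rw [← Matrix.exp_transpose, Matrix.transpose_smul, hK, smul_neg]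

lemma exp_smul_mul_exp_neg_smul (t : ℝ) : exp (t • K) * exp (-(t • K)) = 1 := by
  rw [← Matrix.exp_add_of_commute (t • K) _ (Commute.neg_right rfl), add_neg_cancel, exp_zero]

lemma exp_smul_mem_orthogonalGroup (hK : Kᵀ = -K) (t : ℝ) :
    exp (t • K) ∈ orthogonalGroup n ℝ := by
  rw [mem_orthogonalGroup_iff, transpose_exp_smul hK, exp_smul_mul_exp_neg_smul]

-- `t ↦ det (exp (t • K))` is continuous, takes values `±1` on the connected line, and is `1` at `0`.
lemma exp_smul_mem_specialOrthogonalGroup (hK : Kᵀ = -K) (t : ℝ) :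
    exp (t • K) ∈ specialOrthogonalGroup n ℝ := by
  refine mem_specialOrthogonalGroup_iff.mpr ⟨exp_smul_mem_orthogonalGroup hK t, ?_⟩
  have hcont : Continuous fun s : ℝ => (exp (s • K)).det :=
    (exp_continuous.comp (continuous_id.smul continuous_const)).matrix_det
  have hsq : Set.EqOn ((fun s : ℝ => (exp (s • K)).det) ^ 2) 1 Set.univ := fun s _ => by
    simpa [sq] using
      congrArg det ((mem_orthogonalGroup_iff _ _).mp (exp_smul_mem_orthogonalGroup hK s))
  rcases isPreconnected_univ.eq_one_or_eq_neg_one_of_sq_eq hcont.continuousOn hsq with h | h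
  · exact h (Set.mem_univ t)
  · have h0 := h (Set.mem_univ 0)
    norm_num at h0

end SkewSymmetricExp

lemma exp_neg_smul_mul_skew_exp_smul_mulVec {K : Matrix (Fin 3) (Fin 3) ℝ} (hK : Kᵀ = -K)
    (t : ℝ) (u : Fin 3 → ℝ) :
    exp (-(t • K)) * skew (exp (t • K) *ᵥ u) = skew u * exp (-(t • K)) := by
  simpa only [transpose_exp_smul hK] using
    transpose_mul_skew_mulVec (exp_smul_mem_specialOrthogonalGroup hK t) u

section Gamma

variable {d : ℕ} (A : Matrix (Fin d) (Fin d) ℝ)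

lemma smul_Gamma_one_smul (s : ℝ) :
    s • Gamma 1 (s • A) = ∑' n : ℕ, (s ^ (n + 1) / (n + 1)!) • A ^ n := by
  rw [Gamma, ← tsum_const_smul'']
  refine tsum_congr fun n => ?_
  rw [smul_pow, smul_smul, smul_smul, pow_succ]
  congr 1
  ring

lemma exp_smul_eq_tsum (s : ℝ) : exp (s • A) = ∑' n : ℕ, (s ^ n / n !) • A ^ n := by
  rw [exp_eq_tsum ℝ]
  refine tsum_congr fun n => ?_
  rw [smul_pow, smul_smul, inv_mul_eq_div]

lemma hasDerivAt_pow_succ_div_factorial (n : ℕ) (y : ℝ) :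
    HasDerivAt (fun s : ℝ => s ^ (n + 1) / (n + 1)!) (y ^ n / n !) y := by
  refine ((hasDerivAt_pow (n + 1) y).div_const ((n + 1)! : ℝ)).congr_deriv ?_
  rw [Nat.factorial_succ]
  push_cast
  field_simp

lemma norm_pow_div_factorial_smul_pow_le {ι : Type*} [Fintype ι] [DecidableEq ι] [Nonempty ι]
    (B : Matrix ι ι ℝ) {r y : ℝ} (hy : |y| ≤ r) (n : ℕ) :
    ‖(y ^ n / n !) • B ^ n‖ ≤ (r * ‖B‖) ^ n / n ! := by
  rw [norm_smul, norm_div, norm_pow, Real.norm_eq_abs, RCLike.norm_natCast, mul_pow,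
    div_mul_eq_mul_div]
  have hr : 0 ≤ r := (abs_nonneg y).trans hy
  gcongr
  exact norm_pow_le B n

lemma hasDerivAt_smul_Gamma_one_smul [NeZero d] (t : ℝ) :
    HasDerivAt (fun s : ℝ => s • Gamma 1 (s • A)) (exp (t • A)) t := by
  simp_rw [smul_Gamma_one_smul, exp_smul_eq_tsum]
  have ht : t ∈ Metric.ball (0 : ℝ) (|t| + 1) := by simp
  refine hasDerivAt_tsum_of_isPreconnected (Real.summable_pow_div_factorial ((|t| + 1) * ‖A‖))
    Metric.isOpen_ball (convex_ball _ _).isPreconnected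
    (fun n y _ => (hasDerivAt_pow_succ_div_factorial n y).smul_const (A ^ n))
    (fun n y hy => norm_pow_div_factorial_smul_pow_le A ?_ n) (Metric.mem_ball_self ?_) ?_ ht
  · exact (mem_ball_zero_iff.mp hy).le
  · positivity
  · simp

end Gamma

/-- The closed-form left-invariant state transition block
`Φ(t) = −exp(−t K) skew(Γ₁(t K) f) t` (with `K = skew ω`) satisfies `Φ(0) = 0` and
`Φ'(t) = −skew(f) exp(−t K) − K Φ(t)`. -/
theorem phi21_closed_form (ω f : Fin 3 → ℝ)
    (K : Matrix (Fin 3) (Fin 3) ℝ) (hK : K = skew ω)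
    (Φ : ℝ → Matrix (Fin 3) (Fin 3) ℝ)
    (hΦ : ∀ t : ℝ, Φ t = -(t • (NormedSpace.exp (-(t • K)) * skew (Gamma 1 (t • K) *ᵥ f)))) :
    Φ 0 = 0 ∧
      ∀ t : ℝ, HasDerivAt Φ
        (-(skew f * NormedSpace.exp (-(t • K))) - K * Φ t) t := by
  have hKskew : Kᵀ = -K := hK ▸ skew_transpose ω
  have hΦ' : Φ = fun s => -(exp (-(s • K)) * skew ((s • Gamma 1 (s • K)) *ᵥ f)) :=
    funext fun s => by rw [hΦ, smul_mulVec, skew_smul, mul_smul_comm]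
  refine ⟨by simp [hΦ], fun t => ?_⟩
  have hexp : HasDerivAt (fun s : ℝ => exp (-(s • K))) (-K * exp (-(t • K))) t := by
    simp only [← smul_neg]
    exact hasDerivAt_exp_smul_const' (-K) t
  have hderiv : HasDerivAt Φ
      (-(-K * exp (-(t • K)) * skew ((t • Gamma 1 (t • K)) *ᵥ f)
        + exp (-(t • K)) * skew (exp (t • K) *ᵥ f))) t := by
    rw [hΦ']
    exact (hexp.mul ((hasDerivAt_smul_Gamma_one_smul K t).skew_mulVec f)).neg
  rw [exp_neg_smul_mul_skew_exp_smul_mulVec hKskew] at hderiv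
  convert hderiv using 1
  rw [hΦ']
  noncomm_ring
end
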